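/- arXiv:1812.07072 — 2 statements merged into one kernel-verified Lean document; each statement's English description precedes it below -/
import Mathlib

section
/- For all integers n, N ≥ 1, the (−N,N)-linear graph on the set of integers {a ∈ ℤ : −nN < a < nN} is (n,(−N,N))-universal. -/
/-!
Mean payoff forces every cycle of a graph to have nonnegative weight (otherwise repeat it
forever), so cutting cycles out of a walk never increases its weight, and in a graph with at
most `n` vertices every walk can be replaced by one of length `< n` that is no heavier. With
weights in `(-N, N)` such a walk weighs strictly between `-nN` and `nN`. Hence the distance
`φ v`, the least weight of a walk from the initial vertex to `v`, exists and lies in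
`(-nN, nN)`, and the triangle inequality `φ v' ≤ φ v + w` for an edge `(v, w, v')` is exactly
the edge condition of the linear graph.

The linear graph itself satisfies mean payoff: along an infinite path the prefix sums are at
least the difference of two vertices, so they are bounded below and the averages have
nonnegative liminf.
-/

open Filter


/-- A finite path: a list of consecutive edges, all belonging to `E`,
starting at `u` (when nonempty). -/
def FinPath {V : Type} (E : Set (V × ℤ × V)) (u : V) (p : List (V × ℤ × V)) : Prop :=
  (∀ e ∈ p, e ∈ E) ∧ List.Chain' (fun e e' => e.2.2 = e'.1) p ∧
    ∀ h : p ≠ [], (p.head h).1 = u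

/-- The last vertex of a finite path starting at `u` (which is `u` itself for the empty path). -/
def lastV {V : Type} (u : V) (p : List (V × ℤ × V)) : V :=
  (p.getLastD (u, 0, u)).2.2

/-- An infinite path: a sequence of consecutive edges, all belonging to `E`. -/
def InfPath {V : Type} (E : Set (V × ℤ × V)) (π : ℕ → V × ℤ × V) : Prop :=
  (∀ i, π i ∈ E) ∧ ∀ i, (π i).2.2 = (π (i + 1)).1

/-- The total weight of a finite path. -/
def pathWeight {V : Type} (p : List (V × ℤ × V)) : ℤ :=
  (p.map fun e => e.2.1).sum

/-- A sequence of integer weights satisfies mean payoff if the liminf of the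
averages of its prefixes is nonnegative. -/
def MeanPayoffSeq (w : ℕ → ℤ) : Prop :=
  0 ≤ Filter.atTop.liminf (fun ℓ : ℕ => (∑ i ∈ Finset.range ℓ, (w i : ℝ)) / (ℓ : ℝ))

/-- A graph (given by its edge set) satisfies mean payoff if all its infinite paths do. -/
def SatMP {V : Type} (E : Set (V × ℤ × V)) : Prop :=
  ∀ π : ℕ → V × ℤ × V, InfPath E π → MeanPayoffSeq (fun i => (π i).2.1)

/-- A cycle: a nonempty finite path whose first and last vertices coincide. -/
def IsCycle {V : Type} (E : Set (V × ℤ × V)) (p : List (V × ℤ × V)) : Prop :=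
  p ≠ [] ∧ ∃ v, FinPath E v p ∧ lastV v p = v

/-- A `W`-graph: a finite set of vertices, edges labelled by weights in `W`,
and an initial vertex from which every vertex is reachable. -/
structure WGraph (W : Finset ℤ) where
  V : Type
  fin : Fintype V
  E : Set (V × ℤ × V)
  init : V
  wt : ∀ e ∈ E, e.2.1 ∈ W
  reach : ∀ v : V, ∃ p, FinPath E init p ∧ lastV init p = v

attribute [instance] WGraph.fin

/-- The `W`-linear graph on a set `A ⊆ ℤ`: vertices are the elements of `A`, and
for `v, v' ∈ A` and `w ∈ W` there is an edge `(v, w, v')` whenever `v' - v ≤ w`. -/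
def LinE (W : Finset ℤ) (A : Set ℤ) : Set (ℤ × ℤ × ℤ) :=
  {e | e.1 ∈ A ∧ e.2.2 ∈ A ∧ e.2.1 ∈ W ∧ e.2.2 - e.1 ≤ e.2.1}

/-- A homomorphism of labelled graphs (no requirement on initial vertices). -/
def IsHom {V U : Type} (E : Set (V × ℤ × V)) (E' : Set (U × ℤ × U)) (φ : V → U) : Prop :=
  ∀ e ∈ E, (φ e.1, e.2.1, φ e.2.2) ∈ E'

/-- A graph (given by its edge set) is `(n,W)`-universal if it satisfies mean payoff and
every `(n,W)`-graph satisfying mean payoff admits a homomorphism into it. -/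
def Universal (n : ℕ) (W : Finset ℤ) {U : Type} (EU : Set (U × ℤ × U)) : Prop :=
  SatMP EU ∧
    ∀ G : WGraph W, Fintype.card G.V ≤ n → SatMP G.E → ∃ φ : G.V → U, IsHom G.E EU φ

/-- The set of weights `(-N, N)`: integers `w` with `-N < w < N`. -/
noncomputable def Wball (N : ℕ) : Finset ℤ := Finset.Ioo (-(N : ℤ)) (N : ℤ)

/-- `φ` is the distance function from the initial vertex: `φ v` is the minimum total
weight of a finite path from the initial vertex to `v`. -/
def IsDistFrom {W : Finset ℤ} (G : WGraph W) (φ : G.V → ℤ) : Prop :=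
  ∀ v : G.V,
    (∃ p, FinPath G.E G.init p ∧ lastV G.init p = v ∧ pathWeight p = φ v) ∧
    ∀ p, FinPath G.E G.init p → lastV G.init p = v → φ v ≤ pathWeight p

open Finset

section Walks

variable {V : Type} {E : Set (V × ℤ × V)}

/-- `f 0, …, f L` are the vertices and `w 0, …, w (L - 1)` the weights of the walk. -/
def IsWalk (E : Set (V × ℤ × V)) (L : ℕ) (f : ℕ → V) (w : ℕ → ℤ) : Prop :=
  ∀ i < L, (f i, w i, f (i + 1)) ∈ E

def HasWalk (E : Set (V × ℤ × V)) (u v : V) (L : ℕ) (s : ℤ) : Prop :=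
  ∃ f w, IsWalk E L f w ∧ f 0 = u ∧ f L = v ∧ ∑ i ∈ range L, w i = s

theorem IsWalk.take {L M : ℕ} {f : ℕ → V} {w : ℕ → ℤ} (h : IsWalk E (L + M) f w) :
    IsWalk E L f w :=
  fun i hi => h i (by omega)

theorem IsWalk.drop {L M : ℕ} {f : ℕ → V} {w : ℕ → ℤ} (h : IsWalk E (L + M) f w) :
    IsWalk E M (fun i => f (L + i)) (fun i => w (L + i)) :=
  fun i hi => by simpa only [add_assoc] using h (L + i) (by omega)

theorem IsWalk.hasWalk {L : ℕ} {f : ℕ → V} {w : ℕ → ℤ} (h : IsWalk E L f w) :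
    HasWalk E (f 0) (f L) L (∑ i ∈ range L, w i) :=
  ⟨f, w, h, rfl, rfl, rfl⟩

theorem hasWalk_single {u v : V} {x : ℤ} (he : (u, x, v) ∈ E) : HasWalk E u v 1 x := by
  refine ⟨fun i => if i = 0 then u else v, fun _ => x, fun i hi => ?_, rfl, rfl, by simp⟩
  obtain rfl : i = 0 := by omega
  simpa using he

theorem HasWalk.append {u v x : V} {L M : ℕ} {s t : ℤ} (h₁ : HasWalk E u v L s)
    (h₂ : HasWalk E v x M t) : HasWalk E u x (L + M) (s + t) := by
  obtain ⟨f, w, hw, rfl, rfl, rfl⟩ := h₁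
  obtain ⟨g, w', hw', hg0, rfl, rfl⟩ := h₂
  refine ⟨fun i => if i ≤ L then f i else g (i - L), fun i => if i < L then w i else w' (i - L),
    fun i hi => ?_, by simp, ?_, ?_⟩
  · rcases lt_or_ge i L with hiL | hiL
    · simpa [hiL.le, hiL, Nat.succ_le_of_lt hiL] using hw i hiL
    · have hstep : i + 1 - L = i - L + 1 := by omega
      have hstart : (if i ≤ L then f i else g (i - L)) = g (i - L) := by
        split_ifs with h
        · obtain rfl : i = L := by omega
          simp [hg0]
        · rfl
      simpa [hstart, hstep, not_lt.mpr hiL, show ¬ i + 1 ≤ L by omega] using hw' (i - L) (by omega)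
  · rcases Nat.eq_zero_or_pos M with rfl | hM
    · simp [hg0]
    · simp [show ¬ L + M ≤ L by omega]
  · rw [sum_range_add]
    congr 1
    · exact sum_congr rfl fun i hi => if_pos (mem_range.mp hi)
    · simp

theorem FinPath.hasWalk {u : V} {p : List (V × ℤ × V)} (h : FinPath E u p) :
    HasWalk E u (lastV u p) p.length (pathWeight p) := by
  induction p generalizing u with
  | nil => exact ⟨fun _ => u, fun _ => 0, fun i hi => absurd hi (by simp), rfl, rfl, rfl⟩
  | cons e p ih =>
    obtain ⟨hmem, hchain, hhead⟩ := h
    obtain ⟨hlink, hchain⟩ := List.isChain_cons.mp hchain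
    have he : e = (u, e.2.1, e.2.2) := by
      rw [← hhead (List.cons_ne_nil e p)]; rfl
    have htail : FinPath E e.2.2 p :=
      ⟨fun x hx => hmem x (List.mem_cons_of_mem e hx), hchain,
        fun hp => (hlink _ (List.head?_eq_some_head hp)).symm⟩
    have hlast : lastV u (e :: p) = lastV e.2.2 p := by
      cases p <;> simp only [lastV, List.getLastD_cons, List.getLastD_nil]
    rw [hlast, List.length_cons, add_comm, pathWeight, List.map_cons, List.sum_cons]
    exact (hasWalk_single (he ▸ hmem e List.mem_cons_self)).append (ih htail)

theorem HasWalk.abs_le {u v : V} {L : ℕ} {s B : ℤ} (hE : ∀ e ∈ E, |e.2.1| ≤ B)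
    (h : HasWalk E u v L s) : |s| ≤ L * B := by
  obtain ⟨f, w, hw, -, -, rfl⟩ := h
  calc |∑ i ∈ range L, w i| ≤ ∑ i ∈ range L, |w i| := abs_sum_le_sum_abs _ _
    _ ≤ ∑ _i ∈ range L, B := sum_le_sum fun i hi => hE _ (hw i (mem_range.mp hi))
    _ = L * B := by simp

end Walks

section Shortening

variable {V : Type} {E : Set (V × ℤ × V)}

theorem exists_repeat_of_card_le [Fintype V] {L : ℕ} {f : ℕ → V} (hL : Fintype.card V ≤ L) :
    ∃ i d m, 0 < d ∧ L = i + d + m ∧ f (i + d) = f i := by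
  have hcard : Fintype.card V < Fintype.card (Fin (L + 1)) := by
    rw [Fintype.card_fin]; omega
  obtain ⟨x, y, hxy, hf⟩ := Fintype.exists_ne_map_eq_of_card_lt (fun t : Fin (L + 1) => f t) hcard
  rcases lt_or_gt_of_ne hxy with h | h
  · exact ⟨x, y - x, L - y, by omega, by omega, by rw [Nat.add_sub_cancel' h.le]; exact hf.symm⟩
  · exact ⟨y, x - y, L - x, by omega, by omega, by rw [Nat.add_sub_cancel' h.le]; exact hf⟩

theorem HasWalk.exists_length_lt_card [Fintype V] {u v : V} {L : ℕ} {s : ℤ}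
    (hcyc : ∀ x L s, 0 < L → HasWalk E x x L s → 0 ≤ s) (h : HasWalk E u v L s) :
    ∃ L' < Fintype.card V, ∃ s' ≤ s, HasWalk E u v L' s' := by
  induction L using Nat.strong_induction_on generalizing s with
  | _ L ih =>
  obtain ⟨f, w, hw, rfl, rfl, rfl⟩ := h
  by_cases hL : L < Fintype.card V
  · exact ⟨L, hL, _, le_rfl, hw.hasWalk⟩
  -- the walk returns to `f i` at time `i + d`; cut out that nonnegative cycle and recurse
  obtain ⟨i, d, m, hd, rfl, hfi⟩ := exists_repeat_of_card_le (f := f) (not_lt.mp hL)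
  have hpre := hw.take.take.hasWalk
  have hcycle := hw.take.drop.hasWalk
  have hsuf := hw.drop.hasWalk
  simp only [add_zero, hfi] at hcycle hsuf
  obtain ⟨L', hL', s', hs', h'⟩ := ih (i + m) (by omega) (hpre.append hsuf)
  refine ⟨L', hL', s', hs'.trans ?_, h'⟩
  rw [sum_range_add, sum_range_add]
  linarith [hcyc _ _ _ hd hcycle]

end Shortening

section MeanPayoff

noncomputable def prefixMean (w : ℕ → ℤ) (ℓ : ℕ) : ℝ := (∑ i ∈ range ℓ, (w i : ℝ)) / ℓ

theorem meanPayoffSeq_iff (w : ℕ → ℤ) : MeanPayoffSeq w ↔ 0 ≤ liminf (prefixMean w) atTop :=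
  Iff.rfl

theorem le_prefixMean {w : ℕ → ℤ} {c : ℤ} (hw : ∀ i, c ≤ w i) {ℓ : ℕ} (hℓ : 0 < ℓ) :
    c ≤ prefixMean w ℓ := by
  rw [prefixMean, le_div_iff₀ (by exact_mod_cast hℓ)]
  calc (c : ℝ) * ℓ = ∑ _i ∈ range ℓ, (c : ℝ) := by simp [mul_comm]
    _ ≤ ∑ i ∈ range ℓ, (w i : ℝ) := sum_le_sum fun i _ => by exact_mod_cast hw i

theorem prefixMean_le {w : ℕ → ℤ} {c : ℤ} (hw : ∀ i, w i ≤ c) {ℓ : ℕ} (hℓ : 0 < ℓ) :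
    prefixMean w ℓ ≤ c := by
  have := le_prefixMean (w := fun i => -w i) (c := -c) (fun i => neg_le_neg (hw i)) hℓ
  simp only [prefixMean, Int.cast_neg, sum_neg_distrib, neg_div] at this
  exact neg_le_neg_iff.mp this

theorem isBoundedUnder_ge_prefixMean {w : ℕ → ℤ} {c : ℤ} (hw : ∀ i, c ≤ w i) :
    IsBoundedUnder (· ≥ ·) atTop (prefixMean w) :=
  isBoundedUnder_of_eventually_ge (eventually_atTop.mpr ⟨1, fun _ hℓ => le_prefixMean hw hℓ⟩)

theorem isBoundedUnder_le_prefixMean {w : ℕ → ℤ} {c : ℤ} (hw : ∀ i, w i ≤ c) :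
    IsBoundedUnder (· ≤ ·) atTop (prefixMean w) :=
  isBoundedUnder_of_eventually_le (eventually_atTop.mpr ⟨1, fun _ hℓ => prefixMean_le hw hℓ⟩)

/-- The averages are at least `c / ℓ`, which tends to `0`. -/
theorem meanPayoffSeq_of_le_sum {w : ℕ → ℤ} {c D : ℤ} (hsum : ∀ ℓ, c ≤ ∑ i ∈ range ℓ, w i)
    (hw : ∀ i, w i ≤ D) : MeanPayoffSeq w := by
  have hlim : Tendsto (fun ℓ : ℕ => (c : ℝ) / ℓ) atTop (nhds 0) :=
    tendsto_const_div_atTop_nhds_zero_nat _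
  rw [meanPayoffSeq_iff, ← hlim.liminf_eq]
  refine liminf_le_liminf (Eventually.of_forall fun ℓ => ?_) hlim.isBoundedUnder_ge
    (isBoundedUnder_le_prefixMean hw).isCoboundedUnder_ge
  exact div_le_div_of_nonneg_right (by exact_mod_cast hsum ℓ) (Nat.cast_nonneg ℓ)

theorem sum_range_mul_mod (w : ℕ → ℤ) (L k : ℕ) :
    ∑ i ∈ range (k * L), w (i % L) = k * ∑ i ∈ range L, w i := by
  induction k with
  | zero => simp
  | succ k ih =>
    rw [add_mul, one_mul, sum_range_add, ih]
    have hmod : ∀ i ∈ range L, w ((k * L + i) % L) = w i := fun i hi => by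
      rw [Nat.mul_add_mod_self_right, Nat.mod_eq_of_lt (mem_range.mp hi)]
    rw [sum_congr rfl hmod]
    push_cast
    ring

/-- At the times `k * L` the average of the `L`-periodic sequence equals `(∑ i < L, w i) / L`. -/
theorem sum_nonneg_of_meanPayoffSeq_mod {w : ℕ → ℤ} {L : ℕ} (hL : 0 < L)
    (h : MeanPayoffSeq fun i => w (i % L)) : 0 ≤ ∑ i ∈ range L, w i := by
  have hperiod : ∀ k, 0 < k → prefixMean (fun i => w (i % L)) (k * L) = (∑ i ∈ range L, w i) / L :=
    fun k hk => by
      rw [prefixMean, ← Int.cast_sum, sum_range_mul_mod]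
      push_cast
      rw [mul_div_mul_left _ _ (by positivity)]
  have hfreq : ∃ᶠ ℓ in atTop, prefixMean (fun i => w (i % L)) ℓ ≤ (∑ i ∈ range L, w i : ℤ) / L :=
    frequently_atTop.mpr fun m => ⟨(m + 1) * L, by nlinarith, (hperiod (m + 1) m.succ_pos).le⟩
  obtain ⟨c, hc⟩ := ((range L).image w).bddBelow
  have hlow : ∀ i, c ≤ w (i % L) := fun i =>
    hc (mem_image_of_mem w (mem_range.mpr (Nat.mod_lt i hL)))
  have := ((meanPayoffSeq_iff _).mp h).trans
    (liminf_le_of_frequently_le hfreq (isBoundedUnder_ge_prefixMean hlow))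
  rw [le_div_iff₀ (by positivity), zero_mul] at this
  exact_mod_cast this

end MeanPayoff

section Distance

variable {V : Type} {E : Set (V × ℤ × V)}

theorem SatMP.nonneg_of_hasWalk (hE : SatMP E) {u : V} {L : ℕ} {s : ℤ} (hL : 0 < L)
    (h : HasWalk E u u L s) : 0 ≤ s := by
  obtain ⟨f, w, hw, hf0, hfL, rfl⟩ := h
  refine sum_nonneg_of_meanPayoffSeq_mod hL (hE (fun i => (f (i % L), w (i % L), f (i % L + 1)))
    ⟨fun i => hw _ (Nat.mod_lt i hL), fun i => ?_⟩)
  change f (i % L + 1) = f ((i + 1) % L)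
  rw [← Nat.mod_add_mod]
  obtain hlt | heq : i % L + 1 < L ∨ i % L + 1 = L := by have := Nat.mod_lt i hL; omega
  · rw [Nat.mod_eq_of_lt hlt]
  · rw [heq, Nat.mod_self, hfL, hf0]

def walkWeights (E : Set (V × ℤ × V)) (u v : V) : Set ℤ := {s | ∃ L, HasWalk E u v L s}

/-- Junk (`sInf` of an empty or unbounded set is `0`) unless `v` is reachable from `u` and no
cycle is negative; the lemmas below assume both. -/
noncomputable def minWeight (E : Set (V × ℤ × V)) (u v : V) : ℤ := sInf (walkWeights E u v)

variable [Fintype V] {B : ℤ}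
  (hcyc : ∀ x L s, 0 < L → HasWalk E x x L s → 0 ≤ s) (hE : ∀ e ∈ E, |e.2.1| ≤ B) (hB : 0 < B)
include hcyc hE hB

theorem HasWalk.exists_abs_lt_card_mul {u v : V} {L : ℕ} {s : ℤ} (h : HasWalk E u v L s) :
    ∃ s' ≤ s, s' ∈ walkWeights E u v ∧ |s'| < Fintype.card V * B := by
  obtain ⟨L', hL', s', hs', h'⟩ := h.exists_length_lt_card hcyc
  refine ⟨s', hs', ⟨L', h'⟩, (h'.abs_le hE).trans_lt ?_⟩
  exact mul_lt_mul_of_pos_right (by exact_mod_cast hL') hB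

theorem bddBelow_walkWeights (u v : V) : BddBelow (walkWeights E u v) :=
  ⟨-(Fintype.card V * B), fun t ⟨_, ht⟩ => by
    obtain ⟨t', ht', -, habs⟩ := ht.exists_abs_lt_card_mul hcyc hE hB
    linarith [neg_abs_le t']⟩

theorem HasWalk.minWeight_mem_walkWeights {u v : V} {L : ℕ} {s : ℤ} (h : HasWalk E u v L s) :
    minWeight E u v ∈ walkWeights E u v :=
  Int.csInf_mem ⟨s, L, h⟩ (bddBelow_walkWeights hcyc hE hB u v)

theorem HasWalk.minWeight_mem_Ioo {u v : V} {L : ℕ} {s : ℤ} (h : HasWalk E u v L s) :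
    minWeight E u v ∈ Set.Ioo (-(Fintype.card V * B)) (Fintype.card V * B) := by
  obtain ⟨_, hmin⟩ := h.minWeight_mem_walkWeights hcyc hE hB
  obtain ⟨s', hs', hmem', habs⟩ := hmin.exists_abs_lt_card_mul hcyc hE hB
  have hle : minWeight E u v ≤ s' := csInf_le (bddBelow_walkWeights hcyc hE hB u v) hmem'
  exact abs_lt.mp (le_antisymm hle hs' ▸ habs)

theorem HasWalk.minWeight_le_add {u v v' : V} {L : ℕ} {s x : ℤ} (h : HasWalk E u v L s)
    (he : (v, x, v') ∈ E) : minWeight E u v' ≤ minWeight E u v + x := by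
  obtain ⟨M, hmin⟩ := h.minWeight_mem_walkWeights hcyc hE hB
  exact csInf_le (bddBelow_walkWeights hcyc hE hB u v') ⟨M + 1, hmin.append (hasWalk_single he)⟩

end Distance

theorem satMP_linE {W : Finset ℤ} {A : Set ℤ} {a b : ℤ} (hA : A ⊆ Set.Icc a b) :
    SatMP (LinE W A) := by
  intro π ⟨hmem, hnext⟩
  obtain ⟨D, hD⟩ := W.bddAbove
  have hstep i : (π (i + 1)).1 - (π i).1 ≤ (π i).2.1 := hnext i ▸ (hmem i).2.2.2
  refine meanPayoffSeq_of_le_sum (c := a - b) (fun ℓ => ?_) fun i => hD (hmem i).2.2.1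
  have h0 := hA (hmem 0).1
  have hℓ := hA (hmem ℓ).1
  calc a - b ≤ (π ℓ).1 - (π 0).1 := by linarith [h0.2, hℓ.1]
    _ = ∑ i ∈ range ℓ, ((π (i + 1)).1 - (π i).1) := (sum_range_sub (fun i => (π i).1) ℓ).symm
    _ ≤ ∑ i ∈ range ℓ, (π i).2.1 := sum_le_sum fun i _ => hstep i

theorem exists_hom_linE_Ioo {n N : ℕ} (hN : 1 ≤ N) (G : WGraph (Wball N))
    (hcard : Fintype.card G.V ≤ n) (hMP : SatMP G.E) :
    ∃ φ : G.V → ℤ, IsHom G.E (LinE (Wball N) (Set.Ioo (-(n * N : ℤ)) (n * N : ℤ))) φ := by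
  have hcyc : ∀ x L s, 0 < L → HasWalk G.E x x L s → 0 ≤ s :=
    fun _ _ _ hL h => hMP.nonneg_of_hasWalk hL h
  have hwt : ∀ e ∈ G.E, |e.2.1| ≤ N := fun e he => by
    have := G.wt e he
    simp only [Wball, mem_Ioo] at this
    exact abs_le.mpr ⟨this.1.le, this.2.le⟩
  have hN' : (0 : ℤ) < N := by exact_mod_cast hN
  have hreach v : ∃ L s, HasWalk G.E G.init v L s := by
    obtain ⟨p, hp, rfl⟩ := G.reach v
    exact ⟨_, _, hp.hasWalk⟩
  have hφ v : minWeight G.E G.init v ∈ Set.Ioo (-(n * N : ℤ)) (n * N) := by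
    obtain ⟨L, s, h⟩ := hreach v
    have hcardN : (Fintype.card G.V : ℤ) * N ≤ n * N :=
      mul_le_mul_of_nonneg_right (by exact_mod_cast hcard) hN'.le
    have hmem := h.minWeight_mem_Ioo hcyc hwt hN'
    exact ⟨by linarith [hmem.1], by linarith [hmem.2]⟩
  refine ⟨minWeight G.E G.init, fun e he => ⟨hφ _, hφ _, G.wt e he, ?_⟩⟩
  obtain ⟨L, s, h⟩ := hreach e.1
  linarith [h.minWeight_le_add hcyc hwt hN' he]

theorem linear_interval_universal_general (n N : ℕ) (hN : 1 ≤ N) :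
    Universal n (Wball N) (LinE (Wball N) (Set.Ioo (-(n * N : ℤ)) (n * N : ℤ))) :=
  ⟨satMP_linE Set.Ioo_subset_Icc_self, fun G hcard hMP => exists_hom_linE_Ioo hN G hcard hMP⟩

/-- for all `n, N ≥ 1`, the `(-N,N)`-linear graph on the interval
`(-nN, nN)` of integers is `(n, (-N,N))`-universal. -/
theorem linear_interval_universal (n N : ℕ) (hn : 1 ≤ n) (hN : 1 ≤ N) :
    Universal n (Wball N) (LinE (Wball N) (Set.Ioo (-(n * N : ℤ)) (n * N : ℤ))) :=
  linear_interval_universal_general n N hN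
end

section
/- Let N ≥ 1 be an integer and let G be a (−N,N)-graph satisfying mean payoff. Write the set of distances {dist(v_init,v) : v ∈ V} in increasing order as d_0 < d_1 < ⋯ < d_{m−1}. Then for every i ∈ [1,m), we have 1 ≤ d_i − d_{i−1} ≤ N − 1. -/
open Filter


/-
Along a shortest path from the initial vertex every edge `(x, w, y)` is tight, `dist y = dist x + w`,
because every prefix of a shortest path is shortest. Hence the distances along such a path move
by at most `N - 1` per step, in either direction. If `d < d'` are consecutive distances, the
distance of the initial vertex lies on one side of the gap `(d, d')`; a shortest path to a vertex
on the other side must jump over the gap in a single step, so `d' - d ≤ N - 1`.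
-/

section Paths

variable {V : Type} {E : Set (V × ℤ × V)} {u : V} {e : V × ℤ × V} {p q : List (V × ℤ × V)}

@[simp]
lemma pathWeight_append : pathWeight (p ++ q) = pathWeight p + pathWeight q := by
  simp [pathWeight]

@[simp]
lemma lastV_nil : lastV u ([] : List (V × ℤ × V)) = u := rfl

@[simp]
lemma lastV_cons : lastV u (e :: p) = lastV e.2.2 p := by
  cases p with
  | nil => rfl
  | cons a p => simp [lastV, List.getLastD_eq_getLast?, List.getLast?_eq_some_getLast]

@[simp]
lemma lastV_append : lastV u (p ++ q) = lastV (lastV u p) q := by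
  induction p generalizing u <;> simp [*]

lemma finPath_iff : FinPath E u p ↔
    (∀ e ∈ p, e ∈ E) ∧ p.IsChain (fun e e' => e.2.2 = e'.1) ∧ ∀ h : p ≠ [], (p.head h).1 = u :=
  Iff.rfl

lemma finPath_nil : FinPath E u [] := by
  simp [finPath_iff]

lemma finPath_cons : FinPath E u (e :: p) ↔ e ∈ E ∧ e.1 = u ∧ FinPath E e.2.2 p := by
  cases p with
  | nil => simp [finPath_iff]
  | cons e' p =>
    simp only [finPath_iff, List.mem_cons, forall_eq_or_imp, List.isChain_cons_cons,
      ne_eq, reduceCtorEq, not_false_eq_true, List.head_cons, forall_const]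
    grind

lemma finPath_append : FinPath E u (p ++ q) ↔ FinPath E u p ∧ FinPath E (lastV u p) q := by
  induction p generalizing u with
  | nil => simp [finPath_nil]
  | cons e p ih => simp only [List.cons_append, finPath_cons, ih, lastV_cons, and_assoc]

end Paths

lemma sub_le_of_finPath_crosses {V : Type} {E : Set (V × ℤ × V)} {ψ : V → ℤ} {a b C : ℤ}
    (hab : a < b) (hgap : ∀ x, ψ x ≤ a ∨ b ≤ ψ x) {u : V} {p : List (V × ℤ × V)}
    (hp : FinPath E u p) (hstep : ∀ e ∈ p, ψ e.2.2 - ψ e.1 ≤ C)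
    (hu : ψ u ≤ a) (hlast : b ≤ ψ (lastV u p)) : b - a ≤ C := by
  induction p generalizing u with
  | nil => rw [lastV_nil] at hlast; omega
  | cons e p ih =>
    obtain ⟨-, rfl, hrest⟩ := finPath_cons.1 hp
    rw [List.forall_mem_cons] at hstep
    rcases hgap e.2.2 with h | h
    · exact ih hrest hstep.2 h (by rwa [lastV_cons] at hlast)
    · omega

section Distances

variable {W : Finset ℤ} {G : WGraph W} {φ : G.V → ℤ} {p q : List (G.V × ℤ × G.V)}

lemma IsDistFrom.le_pathWeight (hφ : IsDistFrom G φ) (hp : FinPath G.E G.init p) :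
    φ (lastV G.init p) ≤ pathWeight p :=
  (hφ _).2 p hp rfl

lemma IsDistFrom.pathWeight_eq_of_append (hφ : IsDistFrom G φ) (hpq : FinPath G.E G.init (p ++ q))
    (hmin : pathWeight (p ++ q) = φ (lastV G.init (p ++ q))) :
    pathWeight p = φ (lastV G.init p) := by
  obtain ⟨hp, hq⟩ := finPath_append.1 hpq
  obtain ⟨r, hr, hr_last, hr_wt⟩ := (hφ (lastV G.init p)).1
  have hrq := hφ.le_pathWeight (finPath_append.2 ⟨hr, hr_last ▸ hq⟩)
  have := hφ.le_pathWeight hp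
  simp only [pathWeight_append, lastV_append, hr_last] at hmin hrq
  omega

lemma IsDistFrom.eq_add_of_mem (hφ : IsDistFrom G φ) (hp : FinPath G.E G.init p)
    (hmin : pathWeight p = φ (lastV G.init p)) {e : G.V × ℤ × G.V} (he : e ∈ p) :
    φ e.2.2 = φ e.1 + e.2.1 := by
  obtain ⟨s, t, rfl⟩ := List.append_of_mem he
  have hs := hφ.pathWeight_eq_of_append hp hmin
  have he₁ : e.1 = lastV G.init s := (finPath_cons.1 (finPath_append.1 hp).2).2.1
  rw [← List.singleton_append, ← List.append_assoc] at hp hmin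
  have hse := hφ.pathWeight_eq_of_append hp hmin
  simp only [pathWeight_append, lastV_append, lastV_cons, lastV_nil] at hse
  rw [he₁, ← hs, ← hse]
  simp [pathWeight]

end Distances

lemma IsDistFrom.exists_path_abs_sub_le {N : ℕ} {G : WGraph (Wball N)} {φ : G.V → ℤ}
    (hφ : IsDistFrom G φ) (z : G.V) :
    ∃ p, FinPath G.E G.init p ∧ lastV G.init p = z ∧ ∀ e ∈ p, |φ e.2.2 - φ e.1| ≤ N - 1 := by
  obtain ⟨p, hp, hlast, hwt⟩ := (hφ z).1
  refine ⟨p, hp, hlast, fun e he => ?_⟩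
  have hw := Finset.mem_Ioo.1 (G.wt e ((finPath_iff.1 hp).1 e he))
  rw [hφ.eq_add_of_mem hp (by rw [hlast, hwt]) he, add_sub_cancel_left, abs_le]
  omega

theorem consecutive_distances_general (N : ℕ) (G : WGraph (Wball N))
    (φ : G.V → ℤ) (hφ : IsDistFrom G φ) :
    ∀ v v' : G.V, φ v < φ v' → (∀ u : G.V, ¬(φ v < φ u ∧ φ u < φ v')) →
      1 ≤ φ v' - φ v ∧ φ v' - φ v ≤ (N : ℤ) - 1 := by
  intro v v' hlt hbetween
  refine ⟨by omega, ?_⟩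
  have hgap (u : G.V) : φ u ≤ φ v ∨ φ v' ≤ φ u := by
    have := hbetween u
    omega
  rcases hgap G.init with hinit | hinit
  · obtain ⟨p, hp, hlast, hstep⟩ := hφ.exists_path_abs_sub_le v'
    exact sub_le_of_finPath_crosses hlt hgap hp (fun e he => (abs_le.1 (hstep e he)).2) hinit
      (by rw [hlast])
  · obtain ⟨p, hp, hlast, hstep⟩ := hφ.exists_path_abs_sub_le v
    have := sub_le_of_finPath_crosses (ψ := fun x => -φ x) (C := N - 1) (neg_lt_neg hlt)
      (fun u => (hgap u).symm.imp neg_le_neg neg_le_neg) hp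
      (fun e he => by linarith [(abs_le.1 (hstep e he)).1]) (neg_le_neg hinit) (by rw [hlast])
    linarith

/-- let `G` be a `(-N,N)`-graph satisfying mean payoff and `φ` its
distance function from the initial vertex. Then any two consecutive values of `φ`
(i.e. values `φ v < φ v'` with no value strictly in between) differ by at least `1`
and at most `N - 1`. -/
theorem consecutive_distances (N : ℕ) (hN : 1 ≤ N) (G : WGraph (Wball N))
    (hMP : SatMP G.E) (φ : G.V → ℤ) (hφ : IsDistFrom G φ) :
    ∀ v v' : G.V, φ v < φ v' → (∀ u : G.V, ¬(φ v < φ u ∧ φ u < φ v')) →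
      1 ≤ φ v' - φ v ∧ φ v' - φ v ≤ (N : ℤ) - 1 :=
  consecutive_distances_general N G φ hφ
end
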